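/- Perfect ICL accuracy of the finetuned weights (conclusion of the finetuning-dynamics theorem): Fix constants α_1 > 0, α_2 > 0, α_3 > 0 and consider the 2-head model with W_KQ^subj = β(Σ_{j=1}^M E(s_j) + α_1 E(p_{-1}))E([sep])^T, W_OV^subj = -Σ_j (Σ_{u∈U, u∉A_j} E(u)) E(s_j)^T, W_KQ^rel = β(Σ_{l=1}^L E(r_l) + α_3·((2/(3·L·U_L)) Σ_{u∈U} E(u) + (1/N) Σ_{i=1}^N E(p_{1-3i}) - (1/T) Σ_{i=1}^T E(p_{-i+1}) - (1/(3M)) Σ_{j=1}^M E(s_j)))E([sep])^T, and W_OV^rel = Σ_l (Σ_{u∈U_l} E(u)) E(r_l)^T + α_2·(N Σ_{l=1}^L u_l u_l^T + (U_L^2/M_ft) Σ_{j∈S_ft} (Σ_{l=1}^L E(a_j^l)) E(s_j)^T), where u_l = Σ_{a=1}^{U_L} E(u_a^l). Then for every ICL sequence X of length T = 3(N+1)-1 with any shared attribute type l* and any subjects j_1,...,j_{N+1} ∈ {1,...,M} (seen or held-out), in the limit β→∞ the unique maximizer of v ↦ E(v)^T f(X) is a_{j_{N+1}}^{l*}; i.e.,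 the model attains perfect last-token accuracy on ICL sequences for all subjects. -/

import Mathlib

open Filter Topology Finset Matrix

namespace CR

/-- Vocabulary tokens: `M` subjects, `L` attribute types each with `U` values,
`G` grammar tokens, `L` relation tokens, and a separator. -/
inductive Tok (M L U G : ℕ) : Type where
  | subj : Fin M → Tok M L U G
  | attr : Fin L → Fin U → Tok M L U G
  | gram : Fin G → Tok M L U G
  | rel  : Fin L → Tok M L U G
  | sep  : Tok M L U G
deriving DecidableEq, Fintype

/-- Embedding dimension: one coordinate per vocabulary token plus `P` positional coordinates. -/
abbrev Dim (M L U G P : ℕ) := Tok M L U G ⊕ Fin P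

abbrev Vec (M L U G P : ℕ) := Dim M L U G P → ℝ

variable {M L U G P : ℕ}

/-- One-hot token embedding `E(v)`. -/
def E (v : Tok M L U G) : Vec M L U G P :=
  fun i => if i = Sum.inl v then 1 else 0

/-- One-hot positional encoding for relative position `-k`
(`pos 0 = E(p₀)`, `pos 1 = E(p₋₁)`, ...); zero if `k ≥ P`. -/
def pos (k : ℕ) : Vec M L U G P :=
  fun i => match i with
  | Sum.inl _ => 0
  | Sum.inr j => if (j : ℕ) = k then 1 else 0

/-- Softmax attention weight of (0-indexed) row `j` among rows `0,…,t-1`, with query row `t-1`;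
row `i` carries the relative positional encoding `p_{-(t-1-i)}`. -/
noncomputable def attn (W : Matrix (Dim M L U G P) (Dim M L U G P) ℝ)
    (X : ℕ → Vec M L U G P) (t j : ℕ) : ℝ :=
  Real.exp ((X j + pos (t - 1 - j)) ⬝ᵥ W.mulVec (X (t - 1))) /
    ∑ i ∈ Finset.range t, Real.exp ((X i + pos (t - 1 - i)) ⬝ᵥ W.mulVec (X (t - 1)))

/-- Attention-head output `g_h^t(X)` (attention over the first `t` rows, query at row `t-1`). -/
noncomputable def gHead (W : Matrix (Dim M L U G P) (Dim M L U G P) ℝ)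
    (X : ℕ → Vec M L U G P) (t : ℕ) : Vec M L U G P :=
  ∑ j ∈ Finset.range t, attn W X t j • X j

/-- Token at (0-indexed) position `t` of a PT sequence with subject `jstar`:
block `k` occupies positions `k(S+3),…,k(S+3)+S+1` (subject, `S` middle tokens, separator),
followed (except after the last block) by the attribute `a_{jstar}^{ltype k}`. -/
def ptTok (S : ℕ) (jstar : Fin M) (ltype : ℕ → Fin L)
    (mid : ℕ → ℕ → Tok M L U G) (a : Fin M → Fin L → Fin U) (t : ℕ) : Tok M L U G :=
  let k := t / (S + 3)
  let r := t % (S + 3)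
  if r = 0 then Tok.subj jstar
  else if r ≤ S then mid k (r - 1)
  else if r = S + 1 then Tok.sep
  else Tok.attr (ltype k) (a jstar (ltype k))

/-- Token at (0-indexed) position `t` of an ICL sequence with shared attribute type `lstar`
and subjects `js 0, js 1, …`: the pattern is subject, separator, attribute, subject, … -/
def iclTok (a : Fin M → Fin L → Fin U) (js : ℕ → Fin M) (lstar : Fin L) (t : ℕ) :
    Tok M L U G :=
  if t % 3 = 0 then Tok.subj (js (t / 3))
  else if t % 3 = 1 then Tok.sep
  else Tok.attr lstar (a (js (t / 3)) lstar)

/-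
As `β → ∞` a softmax head attends uniformly to the rows of maximal logit. With the query `[sep]`,
the subject head gives logit `1` to every subject row and an extra `α₁` to the row at relative
position `-1`, so it attends to the query subject `s_{j_{N+1}}` alone, and `W_OV^subj` turns it into
`-Σ_l Σ_{u ≠ a_{j_{N+1}}^l} E(u)`. The relation head has logit `α₃ (token bonus + position bonus -
1/T)`, which is maximal exactly on the `N` attribute rows; `W_OV^rel` maps each of them to
`α₂ N u_{l*}`, and so does their average. In the limit the logit of `a_{j_{N+1}}^{l*}` is `α₂ N`,
that of another type-`l*` attribute is `α₂ N - 1`, and all other logits are `≤ 0`.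
-/

theorem tendsto_softmax {ι : Type*} [DecidableEq ι] {s J : Finset ι} {f : ι → ℝ} {m : ℝ}
    (hJs : J ⊆ s) (hJ : J.Nonempty) (hmax : ∀ j ∈ J, f j = m) (hlt : ∀ j ∈ s, j ∉ J → f j < m)
    {j : ι} (hj : j ∈ s) :
    Tendsto (fun β : ℝ => Real.exp (β * f j) / ∑ i ∈ s, Real.exp (β * f i)) atTop
      (𝓝 (if j ∈ J then (#J : ℝ)⁻¹ else 0)) := by
  have hshift (i) (hi : i ∈ s) : Tendsto (fun β : ℝ => Real.exp (β * (f i - m))) atTop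
      (𝓝 (if i ∈ J then 1 else 0)) := by
    split_ifs with hiJ
    · simp [hmax i hiJ]
    · exact Real.tendsto_exp_atBot.comp
        (tendsto_id.atTop_mul_const_of_neg (sub_neg.2 (hlt i hi hiJ)))
  have hden : Tendsto (fun β : ℝ => ∑ i ∈ s, Real.exp (β * (f i - m))) atTop (𝓝 #J) := by
    simpa [sum_ite_mem, inter_eq_right.2 hJs] using tendsto_finsetSum s hshift
  have hrescale (β : ℝ) : Real.exp (β * (f j - m)) / ∑ i ∈ s, Real.exp (β * (f i - m))
      = Real.exp (β * f j) / ∑ i ∈ s, Real.exp (β * f i) := by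
    simp only [mul_sub, Real.exp_sub, ← sum_div]
    rw [div_div_div_cancel_right₀ (Real.exp_pos _).ne']
  rw [show (if j ∈ J then (#J : ℝ)⁻¹ else 0) = (if j ∈ J then 1 else 0) / #J by
    split_ifs <;> simp]
  exact ((hshift j hj).div hden (by exact_mod_cast hJ.card_pos.ne')).congr hrescale

lemma E_eq_single (v : Tok M L U G) : (E v : Vec M L U G P) = Pi.single (Sum.inl v) 1 := by
  ext i; simp [E, Pi.single_apply]

lemma pos_eq_single {k : ℕ} (hk : k < P) :
    (pos k : Vec M L U G P) = Pi.single (Sum.inr ⟨k, hk⟩) 1 := by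
  ext (i | i) <;> simp [pos, Pi.single_apply, Fin.ext_iff]

def attnScore (W : Matrix (Dim M L U G P) (Dim M L U G P) ℝ) (X : ℕ → Vec M L U G P)
    (t j : ℕ) : ℝ :=
  (X j + pos (t - 1 - j)) ⬝ᵥ W *ᵥ X (t - 1)

lemma attn_smul (W : Matrix (Dim M L U G P) (Dim M L U G P) ℝ) (X : ℕ → Vec M L U G P)
    (t j : ℕ) (β : ℝ) :
    attn (β • W) X t j = Real.exp (β * attnScore W X t j) /
      ∑ i ∈ range t, Real.exp (β * attnScore W X t i) := by
  simp [attn, attnScore, Matrix.smul_mulVec, dotProduct_smul]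

theorem tendsto_gHead_smul {W : Matrix (Dim M L U G P) (Dim M L U G P) ℝ}
    {X : ℕ → Vec M L U G P} {t : ℕ} {J : Finset ℕ} {m : ℝ} (hJ : J ⊆ range t)
    (hne : J.Nonempty) (hmax : ∀ j ∈ J, attnScore W X t j = m)
    (hlt : ∀ j ∈ range t, j ∉ J → attnScore W X t j < m) :
    Tendsto (fun β : ℝ => gHead (β • W) X t) atTop (𝓝 ((#J : ℝ)⁻¹ • ∑ j ∈ J, X j)) := by
  have hlim := tendsto_finsetSum (range t) fun j hj =>
    (tendsto_softmax hJ hne hmax hlt hj).smul_const (X j)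
  simp only [← attn_smul] at hlim
  unfold gHead
  convert hlim using 2
  simp only [ite_smul, zero_smul, sum_ite_mem, inter_eq_right.2 hJ, smul_sum]

section ICL

variable (a : Fin M → Fin L → Fin U) (js : ℕ → Fin M) (lstar : Fin L)

@[simp] lemma iclTok_three_mul (i : ℕ) :
    (iclTok a js lstar (3 * i) : Tok M L U G) = Tok.subj (js i) := by
  simp [iclTok]

@[simp] lemma iclTok_three_mul_add_one (i : ℕ) :
    (iclTok a js lstar (3 * i + 1) : Tok M L U G) = Tok.sep := by
  simp [iclTok, Nat.add_mod]

@[simp] lemma iclTok_three_mul_add_two (i : ℕ) :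
    (iclTok a js lstar (3 * i + 2) : Tok M L U G) = Tok.attr lstar (a (js i) lstar) := by
  have h : (3 * i + 2) / 3 = i := by omega
  simp [iclTok, Nat.add_mod, h]

lemma attnScore_icl_vecMulVec_sep (k : Vec M L U G P) {N i : ℕ} (hP : 3 * N + 2 ≤ P)
    (hi : i < 3 * N + 2) :
    attnScore (vecMulVec k (E Tok.sep)) (fun t => E (iclTok a js lstar t)) (3 * N + 2) i
      = k (Sum.inl (iclTok a js lstar i)) + k (Sum.inr ⟨3 * N + 1 - i, by omega⟩) := by
  have hq : 3 * N + 2 - 1 = 3 * N + 1 := rfl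
  simp only [attnScore, hq, iclTok_three_mul_add_one, E_eq_single, mulVec_single_one,
    pos_eq_single (show 3 * N + 1 - i < P by omega), add_dotProduct, single_one_dotProduct,
    col_apply, vecMulVec_apply, Pi.single_eq_same, mul_one]

/-- `W_KQ^subj` and `W_KQ^rel` are `vecMulVec k (E [sep])` for the following key vectors `k`. -/
noncomputable def subjKey (α1 : ℝ) : Vec M L U G P := (∑ j : Fin M, E (Tok.subj j)) + α1 • pos 1

noncomputable def relKey (α3 : ℝ) (N T : ℕ) : Vec M L U G P :=
  (∑ l : Fin L, E (Tok.rel l))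
    + α3 • ((2 / (3 * (L : ℝ) * U)) • (∑ l : Fin L, ∑ u : Fin U, E (Tok.attr l u))
      + (N : ℝ)⁻¹ • (∑ i ∈ range N, pos (3 * i + 2))
      - (T : ℝ)⁻¹ • (∑ i ∈ range T, pos i)
      - (1 / (3 * (M : ℝ))) • (∑ j : Fin M, E (Tok.subj j)))

lemma attnScore_subjKey (α1 : ℝ) {N i : ℕ} (hP : 3 * N + 2 ≤ P) (hi : i < 3 * N + 2) :
    attnScore (vecMulVec (subjKey α1 : Vec M L U G P) (E Tok.sep))
      (fun t => E (iclTok a js lstar t)) (3 * N + 2) i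
      = (if i % 3 = 0 then 1 else 0) + if i = 3 * N then α1 else 0 := by
  rw [attnScore_icl_vecMulVec_sep a js lstar _ hP hi]
  obtain ⟨q, r, hr, rfl⟩ : ∃ q r, r < 3 ∧ i = 3 * q + r := ⟨i / 3, i % 3, by omega, by omega⟩
  interval_cases r <;> simp [subjKey, E, pos] <;> split_ifs <;> first | rfl | omega

lemma sum_pos_three_mul_add_two_apply (N : ℕ) (p : Fin P) :
    (∑ k ∈ range N, pos (3 * k + 2) : Vec M L U G P) (Sum.inr p)
      = if (p : ℕ) % 3 = 2 ∧ (p : ℕ) < 3 * N then 1 else 0 := by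
  simp only [Finset.sum_apply, pos]
  split_ifs with hp
  · rw [sum_eq_single_of_mem ((p : ℕ) / 3) (mem_range.2 (by omega)) fun k _ hk => if_neg (by omega)]
    exact if_pos (by omega)
  · exact sum_eq_zero fun k hk => if_neg (by have := mem_range.1 hk; omega)

lemma attnScore_relKey (α3 : ℝ) {N i : ℕ} (hP : 3 * N + 2 ≤ P) (hi : i < 3 * N + 2) :
    attnScore (vecMulVec (relKey α3 N (3 * N + 2) : Vec M L U G P) (E Tok.sep))
      (fun t => E (iclTok a js lstar t)) (3 * N + 2) i
      = α3 * ((if i % 3 = 2 then 2 / (3 * (L : ℝ) * U) + (N : ℝ)⁻¹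
          else if i % 3 = 0 then -(1 / (3 * (M : ℝ))) else 0) - ((3 * N + 2 : ℕ) : ℝ)⁻¹) := by
  rw [attnScore_icl_vecMulVec_sep a js lstar _ hP hi]
  obtain ⟨q, r, hr, rfl⟩ : ∃ q r, r < 3 ∧ i = 3 * q + r := ⟨i / 3, i % 3, by omega, by omega⟩
  simp only [relKey, Pi.add_apply, Pi.sub_apply, Pi.smul_apply, sum_pos_three_mul_add_two_apply]
  interval_cases r <;> simp [E, pos, ite_and, -Finset.sum_boole] <;> split_ifs <;>
    first | omega | ring

theorem tendsto_gHead_subjKey {α1 : ℝ} (hα1 : 0 < α1) {N : ℕ} (hP : 3 * N + 2 ≤ P) :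
    Tendsto (fun β : ℝ => gHead (β • vecMulVec (subjKey α1 : Vec M L U G P) (E Tok.sep))
      (fun t => E (iclTok a js lstar t)) (3 * N + 2)) atTop (𝓝 (E (Tok.subj (js N)))) := by
  have hlim := tendsto_gHead_smul (W := vecMulVec (subjKey α1 : Vec M L U G P) (E Tok.sep))
    (X := fun t => E (iclTok a js lstar t)) (t := 3 * N + 2) (J := {3 * N}) (m := 1 + α1)
    (by simp) (singleton_nonempty _)
    (fun j hj => by
      rw [mem_singleton.1 hj, attnScore_subjKey a js lstar α1 hP (by omega)]
      simp)
    (fun j hj hjN => by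
      rw [attnScore_subjKey a js lstar α1 hP (mem_range.1 hj)]
      rw [mem_singleton] at hjN
      split_ifs <;> linarith)
  simpa using hlim

theorem tendsto_gHead_relKey {α3 : ℝ} (hα3 : 0 < α3) {N : ℕ} (hN : 0 < N)
    (hP : 3 * N + 2 ≤ P) :
    Tendsto (fun β : ℝ => gHead (β • vecMulVec (relKey α3 N (3 * N + 2) : Vec M L U G P)
      (E Tok.sep)) (fun t => E (iclTok a js lstar t)) (3 * N + 2)) atTop
      (𝓝 ((N : ℝ)⁻¹ • ∑ i ∈ range N, E (Tok.attr lstar (a (js i) lstar)))) := by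
  set J := (range N).image (3 * · + 2)
  have hinj : Function.Injective (3 * · + 2 : ℕ → ℕ) := fun x y h => by dsimp only at h; omega
  have hmemJ {j : ℕ} (hj : j < 3 * N + 2) (h : j % 3 = 2) : j ∈ J :=
    mem_image.2 ⟨j / 3, mem_range.2 (by omega), by omega⟩
  have hlim := tendsto_gHead_smul
    (W := vecMulVec (relKey α3 N (3 * N + 2) : Vec M L U G P) (E Tok.sep))
    (X := fun t => E (iclTok a js lstar t)) (t := 3 * N + 2) (J := J)
    (m := α3 * ((2 / (3 * (L : ℝ) * U) + (N : ℝ)⁻¹) - ((3 * N + 2 : ℕ) : ℝ)⁻¹))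
    (image_subset_iff.2 fun i hi => mem_range.2 (by have := mem_range.1 hi; omega))
    ((nonempty_range_iff.2 hN.ne').image _)
    (fun j hj => by
      obtain ⟨i, hi, rfl⟩ := mem_image.1 hj
      rw [attnScore_relKey a js lstar α3 hP (by have := mem_range.1 hi; omega)]
      simp [Nat.add_mod])
    (fun j hj hjJ => by
      rw [mem_range] at hj
      rw [attnScore_relKey a js lstar α3 hP hj, if_neg (mt (hmemJ hj) hjJ)]
      gcongr
      have : (0 : ℝ) ≤ 2 / (3 * (L : ℝ) * U) := by positivity
      have : (0 : ℝ) < (N : ℝ)⁻¹ := by positivity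
      have : (0 : ℝ) ≤ 1 / (3 * (M : ℝ)) := by positivity
      split_ifs <;> linarith)
  rw [card_image_of_injective _ hinj, card_range, sum_image fun x _ y _ h => hinj h] at hlim
  simpa using hlim

end ICL

section Readout

lemma vecMulVec_mulVec_E (x y : Vec M L U G P) (w : Tok M L U G) :
    vecMulVec x y *ᵥ E w = y (Sum.inl w) • x := by
  ext i
  simp [E_eq_single, vecMulVec_apply, mul_comm]

variable (a : Fin M → Fin L → Fin U)

noncomputable def subjOV : Matrix (Dim M L U G P) (Dim M L U G P) ℝ :=
  -(∑ j : Fin M, vecMulVec (∑ l : Fin L, ∑ u ∈ univ.erase (a j l), E (Tok.attr l u))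
    (E (Tok.subj j)))

noncomputable def relOV (Sft : Finset (Fin M)) (α2 : ℝ) (N : ℕ) :
    Matrix (Dim M L U G P) (Dim M L U G P) ℝ :=
  (∑ l : Fin L, vecMulVec (∑ u : Fin U, E (Tok.attr l u)) (E (Tok.rel l)))
    + α2 • ((N : ℝ) • (∑ l : Fin L, vecMulVec
        (∑ u : Fin U, E (Tok.attr l u)) (∑ u : Fin U, E (Tok.attr l u)))
      + ((U : ℝ) ^ 2 / Sft.card) • (∑ j ∈ Sft, vecMulVec
        (∑ l : Fin L, E (Tok.attr l (a j l))) (E (Tok.subj j))))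

lemma subjOV_mulVec_E_subj (j : Fin M) :
    (subjOV a : Matrix (Dim M L U G P) _ ℝ) *ᵥ E (Tok.subj j)
      = -(∑ l : Fin L, ∑ u ∈ univ.erase (a j l), E (Tok.attr l u)) := by
  simp [subjOV, neg_mulVec, sum_mulVec, vecMulVec_mulVec_E, E]

lemma relOV_mulVec_E_attr (Sft : Finset (Fin M)) (α2 : ℝ) (N : ℕ) (l : Fin L) (b : Fin U) :
    (relOV a Sft α2 N : Matrix (Dim M L U G P) _ ℝ) *ᵥ E (Tok.attr l b)
      = (α2 * N) • ∑ u : Fin U, E (Tok.attr l u) := by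
  simp [relOV, add_mulVec, smul_mulVec, sum_mulVec, vecMulVec_mulVec_E, E, smul_smul, ite_and,
    -Finset.sum_boole]

lemma relOV_mulVec_mean_attr (Sft : Finset (Fin M)) (α2 : ℝ) {N : ℕ} (hN : 0 < N) (l : Fin L)
    (b : ℕ → Fin U) :
    (relOV a Sft α2 N : Matrix (Dim M L U G P) _ ℝ) *ᵥ
        ((N : ℝ)⁻¹ • ∑ i ∈ range N, E (Tok.attr l (b i)))
      = (α2 * N) • ∑ u : Fin U, E (Tok.attr l u) := by
  rw [mulVec_smul, mulVec_sum]
  simp only [relOV_mulVec_E_attr, sum_const, card_range]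
  rw [← Nat.cast_smul_eq_nsmul ℝ, inv_smul_smul₀ (by positivity)]

end Readout

lemma E_dotProduct_lt_of_ne {c : ℝ} (hc : 0 < c) (A : Fin L → Fin U) (lstar : Fin L)
    {V : Vec M L U G P} (hV : V = -(∑ l : Fin L, ∑ u ∈ univ.erase (A l), E (Tok.attr l u))
      + c • ∑ u : Fin U, E (Tok.attr lstar u))
    {w : Tok M L U G} (hw : w ≠ Tok.attr lstar (A lstar)) :
    E w ⬝ᵥ V < E (Tok.attr lstar (A lstar)) ⬝ᵥ V := by
  simp only [hV, E_eq_single, single_one_dotProduct]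
  cases w with
  | attr l u =>
    simp only [mem_univ, sum_erase_eq_sub, sum_sub_distrib, neg_sub, Pi.add_apply, Pi.sub_apply,
      Finset.sum_apply, Pi.single_apply, Sum.inl.injEq, Tok.attr.injEq, ite_and, sum_ite_eq,
      ↓reduceIte, sum_ite_irrel, sum_const_zero, Pi.smul_apply, smul_eq_mul, mul_ite, mul_one,
      mul_zero, sub_self, true_and, zero_add]
    by_cases hl : l = lstar
    · subst hl
      have hu : u ≠ A l := fun hu => hw (hu ▸ rfl)
      simp [hu]
    · split_ifs <;> linarith
  | _ => simp [Pi.single_apply, ite_and, hc, -Finset.sum_boole]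

/-- Perfect ICL accuracy of the finetuned weights (conclusion of the
finetuning-dynamics theorem). -/
theorem finetuned_perfect_ICL_accuracy
    (M L U G P N : ℕ) (hN : 0 < N)
    (T : ℕ) (hT : T = 3 * (N + 1) - 1) (hP : T ≤ P)
    (a : Fin M → Fin L → Fin U) (Sft : Finset (Fin M))
    (α1 α2 α3 : ℝ) (hα1 : 0 < α1) (hα2 : 0 < α2) (hα3 : 0 < α3)
    (lstar : Fin L) (js : ℕ → Fin M)
    (X : ℕ → Vec M L U G P) (hX : ∀ t, X t = E (iclTok a js lstar t))
    (WKQsubj WOVsubj WKQrel WOVrel : Matrix (Dim M L U G P) (Dim M L U G P) ℝ)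
    (hKQsubj : WKQsubj = Matrix.vecMulVec
      ((∑ j : Fin M, E (Tok.subj j)) + α1 • pos 1) (E Tok.sep))
    (hOVsubj : WOVsubj = -(∑ j : Fin M, Matrix.vecMulVec
      (∑ l : Fin L, ∑ u ∈ Finset.univ.erase (a j l), E (Tok.attr l u))
      (E (Tok.subj j))))
    (hKQrel : WKQrel = Matrix.vecMulVec
      ((∑ l : Fin L, E (Tok.rel l))
        + α3 • ((2 / (3 * (L : ℝ) * U)) • (∑ l : Fin L, ∑ u : Fin U, E (Tok.attr l u))
          + (N : ℝ)⁻¹ • (∑ i ∈ Finset.range N, pos (3 * i + 2))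
          - (T : ℝ)⁻¹ • (∑ i ∈ Finset.range T, pos i)
          - (1 / (3 * (M : ℝ))) • (∑ j : Fin M, E (Tok.subj j))))
      (E Tok.sep))
    (hOVrel : WOVrel = (∑ l : Fin L, Matrix.vecMulVec
        (∑ u : Fin U, E (Tok.attr l u)) (E (Tok.rel l)))
      + α2 • ((N : ℝ) • (∑ l : Fin L, Matrix.vecMulVec
          (∑ u : Fin U, E (Tok.attr l u)) (∑ u : Fin U, E (Tok.attr l u)))
        + ((U : ℝ) ^ 2 / Sft.card) • (∑ j ∈ Sft, Matrix.vecMulVec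
          (∑ l : Fin L, E (Tok.attr l (a j l))) (E (Tok.subj j))))) :
    ∃ F : Tok M L U G → ℝ,
      (∀ v, Filter.Tendsto (fun β : ℝ =>
          E v ⬝ᵥ (WOVsubj.mulVec (gHead (β • WKQsubj) X T)
            + WOVrel.mulVec (gHead (β • WKQrel) X T)))
        Filter.atTop (𝓝 (F v))) ∧
      ∀ w, w ≠ Tok.attr lstar (a (js N) lstar) →
        F w < F (Tok.attr lstar (a (js N) lstar)) := by
  obtain rfl : T = 3 * N + 2 := by omega
  obtain rfl : X = fun t => E (iclTok a js lstar t) := funext hX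
  replace hKQsubj : WKQsubj = vecMulVec (subjKey α1) (E Tok.sep) := hKQsubj
  replace hKQrel : WKQrel = vecMulVec (relKey α3 N (3 * N + 2)) (E Tok.sep) := hKQrel
  replace hOVsubj : WOVsubj = subjOV a := hOVsubj
  replace hOVrel : WOVrel = relOV a Sft α2 N := hOVrel
  subst hKQsubj hOVsubj hKQrel hOVrel
  refine ⟨fun v => (E v : Vec M L U G P) ⬝ᵥ (subjOV a *ᵥ E (Tok.subj (js N))
    + relOV a Sft α2 N *ᵥ ((N : ℝ)⁻¹ • ∑ i ∈ range N, E (Tok.attr lstar (a (js i) lstar)))),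
    fun v => ?_, fun w hw => ?_⟩
  · have hcont : Continuous fun g : Vec M L U G P × Vec M L U G P =>
        E v ⬝ᵥ (subjOV a *ᵥ g.1 + relOV a Sft α2 N *ᵥ g.2) := by fun_prop
    have hsubj := tendsto_gHead_subjKey (G := G) a js lstar hα1 hP
    have hrel := tendsto_gHead_relKey (G := G) a js lstar hα3 hN hP
    exact ((hcont.tendsto _).comp (hsubj.prodMk_nhds hrel) :)
  · simp only [subjOV_mulVec_E_subj, relOV_mulVec_mean_attr a Sft α2 hN]
    exact E_dotProduct_lt_of_ne (by positivity) (a (js N)) lstar rfl hw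

end CR
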